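/- arXiv:2409.05481 — 3 statements merged into one kernel-verified Lean document; each statement's English description precedes it below -/
import Mathlib

section
/- Let Δ be a simplicial complex and σ a face of Δ such that σ is not an intersection of facets of Δ. Then the link of σ in Δ is a cone, i.e., there exists a vertex v not in σ such that every face of link_Δ(σ) together with v is again a face of link_Δ(σ). In particular link_Δ(σ) is acyclic. -/
/-! If `σ` is not the intersection of the facets containing it, some vertex `w ∉ σ` lies in
every facet containing `σ`. Each face `τ` of the link extends `σ` to a face `τ ∪ σ`, which lies
in such a facet, so `w ∪ τ` is again in the link: the link is a cone with apex `w`. A cone is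
acyclic because `s ↦ ±(w ∪ s)` is a contracting homotopy, `∂h + h∂ = id`, of its augmented
chain complex. -/

open Finset

namespace SRPure

variable {V : Type*}

/-- A downward closed set of finite sets: the faces of an abstract simplicial complex. -/
def IsDown (Δ : Set (Finset V)) : Prop := ∀ s ∈ Δ, ∀ t ⊆ s, t ∈ Δ

/-- A facet is a maximal face. -/
def IsFacet (Δ : Set (Finset V)) (F : Finset V) : Prop :=
  F ∈ Δ ∧ ∀ G ∈ Δ, F ⊆ G → F = G

section Link

variable [DecidableEq V]

/-- The link of a face `σ`. -/
def link (Δ : Set (Finset V)) (σ : Finset V) : Set (Finset V) :=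
  {τ | Disjoint τ σ ∧ τ ∪ σ ∈ Δ}

theorem link_down {Δ : Set (Finset V)} (hΔ : IsDown Δ) (σ : Finset V) :
    IsDown (link Δ σ) := by
  rintro s ⟨hd, hu⟩ t hts
  exact ⟨hd.mono_left hts, hΔ _ hu _ (Finset.union_subset_union hts (Finset.Subset.refl σ))⟩

end Link

section Homology

variable (K : Type*) [Field K] [LinearOrder V]

/-- Simplicial chains spanned by the faces of cardinality `c`. -/
abbrev Chains (Δ : Set (Finset V)) (c : ℕ) : Type _ :=
  {s : Finset V // s ∈ Δ ∧ s.card = c} →₀ K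

/-- The boundary of a single face of cardinality `c+1`. -/
noncomputable def faceBdry {Δ : Set (Finset V)} (hΔ : IsDown Δ) (c : ℕ)
    (s : {s : Finset V // s ∈ Δ ∧ s.card = c + 1}) : Chains K Δ c :=
  ∑ v ∈ s.1.attach,
    ((-1 : K) ^ ((s.1.filter (fun w => w < v.1)).card)) •
      Finsupp.single
        ⟨s.1.erase v.1, hΔ _ s.2.1 _ (Finset.erase_subset _ _),
          by simp [Finset.card_erase_of_mem v.2, s.2.2]⟩ (1 : K)

/-- The simplicial boundary map. -/
noncomputable def bdry {Δ : Set (Finset V)} (hΔ : IsDown Δ) (c : ℕ) :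
    Chains K Δ (c + 1) →ₗ[K] Chains K Δ c :=
  Finsupp.lsum K fun s => LinearMap.toSpanSingleton K _ (faceBdry K hΔ c s)

/-- Reduced cycles in cardinality `c` (homological degree `c - 1`). -/
noncomputable def cycles {Δ : Set (Finset V)} (hΔ : IsDown Δ) :
    (c : ℕ) → Submodule K (Chains K Δ c)
  | 0 => ⊤
  | c + 1 => LinearMap.ker (bdry K hΔ c)

/-- `RH K hΔ c` is the reduced simplicial homology (with coefficients in `K`) of the
complex in homological degree `c - 1`, indexed by the cardinality `c` of faces; so
`RH K hΔ 0` is `H̃₋₁` and `RH K hΔ (i+1)` is `H̃ᵢ`. -/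
noncomputable abbrev RH {Δ : Set (Finset V)} (hΔ : IsDown Δ) (c : ℕ) :=
  @HasQuotient.Quotient (cycles K hΔ c) (Submodule K (cycles K hΔ c))
    (Submodule.hasQuotient (R := K) (M := cycles K hΔ c))
    (Submodule.comap (cycles K hΔ c).subtype (LinearMap.range (bdry K hΔ c)))

/-- A complex is PR (has a "pure resolution") over `K` if links of faces of different
sizes never have nontrivial reduced homology in the same degree. -/
def IsPR {Δ : Set (Finset V)} (hΔ : IsDown Δ) : Prop :=
  ∀ σ ∈ Δ, ∀ τ ∈ Δ, ∀ c : ℕ,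
    Nontrivial (RH K (link_down hΔ σ) c) →
    Nontrivial (RH K (link_down hΔ τ) c) → σ.card = τ.card

end Homology

section Facets

variable {Δ : Set (Finset V)}

theorem exists_isFacet_superset [Finite V] {s : Finset V} (hs : s ∈ Δ) :
    ∃ F, IsFacet Δ F ∧ s ⊆ F := by
  obtain ⟨F, hsF, hF⟩ := Finite.exists_le_maximal (p := (· ∈ Δ)) hs
  exact ⟨F, ⟨hF.prop, fun G hG hFG => le_antisymm hFG (hF.2 hG hFG)⟩, hsF⟩

theorem exists_forall_isFacet_mem_of_not_inter_facets [Fintype V] {σ : Finset V}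
    (hσ : σ ∈ Δ)
    (hnot : ¬ ∃ 𝒮 : Finset (Finset V), 𝒮.Nonempty ∧ (∀ F ∈ 𝒮, IsFacet Δ F) ∧
      ∀ w : V, w ∈ σ ↔ ∀ F ∈ 𝒮, w ∈ F) :
    ∃ w ∉ σ, ∀ F, IsFacet Δ F → σ ⊆ F → w ∈ F := by
  classical
  let 𝒮 : Finset (Finset V) := {F | IsFacet Δ F ∧ σ ⊆ F}
  have h𝒮 : ∀ F, F ∈ 𝒮 ↔ IsFacet Δ F ∧ σ ⊆ F := by simp [𝒮]
  obtain ⟨F₀, hF₀⟩ := exists_isFacet_superset hσ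
  by_contra! h
  refine hnot ⟨𝒮, ⟨F₀, (h𝒮 F₀).2 hF₀⟩, fun F hF => ((h𝒮 F).1 hF).1, fun w => ?_⟩
  refine ⟨fun hw F hF => ((h𝒮 F).1 hF).2 hw, fun hw => ?_⟩
  by_contra hwσ
  obtain ⟨F, hF, hσF, hwF⟩ := h w hwσ
  exact hwF (hw F ((h𝒮 F).2 ⟨hF, hσF⟩))

theorem insert_mem_link [DecidableEq V] [Finite V] (hΔ : IsDown Δ) {σ : Finset V} {w : V}
    (hwσ : w ∉ σ) (hw : ∀ F, IsFacet Δ F → σ ⊆ F → w ∈ F) :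
    ∀ τ ∈ link Δ σ, insert w τ ∈ link Δ σ := by
  rintro τ ⟨hτσ, hτ⟩
  obtain ⟨F, hF, hτF⟩ := exists_isFacet_superset hτ
  refine ⟨Finset.disjoint_insert_left.2 ⟨hwσ, hτσ⟩, ?_⟩
  rw [Finset.insert_union]
  exact hΔ F hF.1 _ (Finset.insert_subset (hw F hF (subset_union_right.trans hτF)) hτF)

theorem empty_mem_link [DecidableEq V] {σ : Finset V} (hσ : σ ∈ Δ) : ∅ ∈ link Δ σ :=
  ⟨Finset.disjoint_empty_left σ, by rwa [Finset.empty_union]⟩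

end Facets

section Cone

variable (K : Type*) [Field K] {Γ : Set (Finset V)}

open Classical in
/-- The chain of a face of cardinality `c`; any other finset gives `0`. -/
noncomputable def faceChain (Γ : Set (Finset V)) (c : ℕ) (t : Finset V) : Chains K Γ c :=
  if h : t ∈ Γ ∧ t.card = c then Finsupp.single ⟨t, h⟩ 1 else 0

theorem faceChain_val {c : ℕ} (s : {s : Finset V // s ∈ Γ ∧ s.card = c}) :
    faceChain K Γ c s.1 = Finsupp.single s 1 :=
  dif_pos s.2

theorem faceChain_of_card_ne {c : ℕ} {t : Finset V} (ht : t.card ≠ c) :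
    faceChain K Γ c t = 0 :=
  dif_neg fun h => ht h.2

variable [LinearOrder V]

section Sign

variable (R : Type*) [CommRing R]

/-- The sign with which `s.erase u` occurs in the boundary of `s` (see `faceBdry`). -/
def posSign (s : Finset V) (u : V) : R := (-1 : R) ^ #{w ∈ s | w < u}

theorem posSign_mul_self (s : Finset V) (u : V) : posSign R s u * posSign R s u = 1 := by
  rw [posSign, ← pow_add, Even.neg_one_pow ⟨_, rfl⟩]

theorem posSign_insert {s : Finset V} {u v : V} (hv : v ∉ s) :
    posSign R (insert v s) u = if v < u then -posSign R s u else posSign R s u := by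
  unfold posSign
  rw [Finset.filter_insert]
  split_ifs with h
  · rw [Finset.card_insert_of_notMem fun h' => hv (Finset.mem_filter.1 h').1, pow_succ,
      mul_neg_one]
  · rfl

theorem posSign_erase {s : Finset V} {u v : V} (hu : u ∈ s) :
    posSign R (s.erase u) v = if u < v then -posSign R s v else posSign R s v := by
  conv_rhs => rw [← Finset.insert_erase hu, posSign_insert R (Finset.notMem_erase u s)]
  split_ifs <;> simp

theorem posSign_mul_posSign_insert_add {s : Finset V} {u v : V} (hu : u ∈ s) (hv : v ∉ s) :
    posSign R s v * posSign R (insert v s) u + posSign R s u * posSign R (s.erase u) v = 0 := by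
  rw [posSign_insert R hv, posSign_erase R hu]
  rcases lt_or_gt_of_ne (ne_of_mem_of_not_mem hu hv) with h | h <;>
    simp [h, h.not_gt, mul_comm]

end Sign

theorem bdry_faceChain (hΓ : IsDown Γ) {c : ℕ} {s : Finset V} (hs : s ∈ Γ)
    (hc : s.card = c + 1) :
    bdry K hΓ c (faceChain K Γ (c + 1) s) =
      ∑ u ∈ s, posSign K s u • faceChain K Γ c (s.erase u) := by
  rw [faceChain_val K ⟨s, hs, hc⟩, bdry, Finsupp.lsum_single, LinearMap.toSpanSingleton_apply,
    one_smul, faceBdry, ← Finset.sum_attach s]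
  exact Finset.sum_congr rfl fun u _ => congrArg _ (faceChain_val K _).symm

variable (v : V)

/-- The cone operator `s ↦ ±(v ∪ s)`, a contracting homotopy when `Γ` is a cone with apex `v`.
It kills the faces containing `v`, as `insert v s = s` then has the wrong cardinality. -/
noncomputable def coneMap (c : ℕ) : Chains K Γ c →ₗ[K] Chains K Γ (c + 1) :=
  Finsupp.lsum K fun s =>
    LinearMap.toSpanSingleton K _ (posSign K s.1 v • faceChain K Γ (c + 1) (insert v s.1))

theorem coneMap_faceChain (hΓ : IsDown Γ) {c : ℕ} {s : Finset V} (hc : s.card = c) :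
    coneMap K v c (faceChain K Γ c s) = posSign K s v • faceChain K Γ (c + 1) (insert v s) := by
  by_cases hs : s ∈ Γ
  · rw [faceChain_val K ⟨s, hs, hc⟩, coneMap, Finsupp.lsum_single,
      LinearMap.toSpanSingleton_apply, one_smul]
  · have hvs : insert v s ∉ Γ := fun h => hs (hΓ _ h _ (Finset.subset_insert v s))
    simp [faceChain, hs, hvs]

variable {v : V} (hΓ : IsDown Γ)
include hΓ

theorem coneMap_bdry_faceChain {c : ℕ} {s : Finset V} (hs : s ∈ Γ) (hc : s.card = c + 1) :
    coneMap K v c (bdry K hΓ c (faceChain K Γ (c + 1) s)) =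
      ∑ u ∈ s, (posSign K s u * posSign K (s.erase u) v) •
        faceChain K Γ (c + 1) (insert v (s.erase u)) := by
  rw [bdry_faceChain K hΓ hs hc, map_sum]
  refine Finset.sum_congr rfl fun u hu => ?_
  rw [map_smul, coneMap_faceChain K v hΓ (by rw [Finset.card_erase_of_mem hu, hc]; rfl),
    smul_smul]

variable (hcone : ∀ τ ∈ Γ, insert v τ ∈ Γ)
include hcone

theorem bdry_coneMap_faceChain {c : ℕ} {s : Finset V} (hs : s ∈ Γ) (hc : s.card = c)
    (hv : v ∉ s) :
    bdry K hΓ c (coneMap K v c (faceChain K Γ c s)) = faceChain K Γ c s +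
      ∑ u ∈ s, (posSign K s v * posSign K (insert v s) u) •
        faceChain K Γ c (insert v (s.erase u)) := by
  rw [coneMap_faceChain K v hΓ hc, map_smul,
    bdry_faceChain K hΓ (hcone s hs) (by rw [Finset.card_insert_of_notMem hv, hc]),
    Finset.sum_insert hv, smul_add, smul_smul, posSign_insert K hv, if_neg (lt_irrefl v),
    posSign_mul_self, one_smul, Finset.erase_insert hv, Finset.smul_sum]
  congr 1
  refine Finset.sum_congr rfl fun u hu => ?_
  rw [smul_smul, Finset.erase_insert_of_ne (ne_of_mem_of_not_mem hu hv).symm]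

theorem bdry_coneMap_add_coneMap_bdry_faceChain {c : ℕ} {s : Finset V} (hs : s ∈ Γ)
    (hc : s.card = c + 1) :
    bdry K hΓ (c + 1) (coneMap K v (c + 1) (faceChain K Γ (c + 1) s)) +
      coneMap K v c (bdry K hΓ c (faceChain K Γ (c + 1) s)) = faceChain K Γ (c + 1) s := by
  rw [coneMap_bdry_faceChain K hΓ hs hc]
  by_cases hv : v ∈ s
  · rw [coneMap_faceChain K v hΓ hc, Finset.insert_eq_of_mem hv,
      faceChain_of_card_ne K (by omega), smul_zero, map_zero, zero_add,
      Finset.sum_eq_single v, posSign_erase K hv, if_neg (lt_irrefl v), posSign_mul_self,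
      one_smul, Finset.insert_erase hv]
    · intro u hu huv
      rw [Finset.insert_eq_of_mem (Finset.mem_erase.2 ⟨huv.symm, hv⟩),
        faceChain_of_card_ne K (by rw [Finset.card_erase_of_mem hu]; omega), smul_zero]
    · exact fun h => absurd hv h
  · rw [bdry_coneMap_faceChain K hΓ hcone hs hc hv, add_assoc, ← Finset.sum_add_distrib,
      Finset.sum_eq_zero, add_zero]
    intro u hu
    rw [← add_smul, posSign_mul_posSign_insert_add K hu hv, zero_smul]

theorem bdry_coneMap_faceChain_empty (hs : ∅ ∈ Γ) :
    bdry K hΓ 0 (coneMap K v 0 (faceChain K Γ 0 ∅)) = faceChain K Γ 0 ∅ := by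
  rw [bdry_coneMap_faceChain K hΓ hcone hs Finset.card_empty (Finset.notMem_empty v),
    Finset.sum_empty, add_zero]

theorem bdry_comp_coneMap_add_coneMap_comp_bdry (c : ℕ) :
    bdry K hΓ (c + 1) ∘ₗ coneMap K v (c + 1) + coneMap K v c ∘ₗ bdry K hΓ c = LinearMap.id := by
  refine Finsupp.lhom_ext' fun s => LinearMap.ext_ring ?_
  simp only [LinearMap.add_comp, LinearMap.comp_apply, LinearMap.add_apply,
    Finsupp.lsingle_apply, LinearMap.id_apply, ← faceChain_val]
  exact bdry_coneMap_add_coneMap_bdry_faceChain K hΓ hcone s.2.1 s.2.2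

theorem bdry_comp_coneMap_zero : bdry K hΓ 0 ∘ₗ coneMap K v 0 = LinearMap.id := by
  refine Finsupp.lhom_ext' fun s => LinearMap.ext_ring ?_
  obtain ⟨s, hs, hc⟩ := s
  obtain rfl := Finset.card_eq_zero.1 hc
  simp only [LinearMap.comp_apply, Finsupp.lsingle_apply, LinearMap.id_apply, ← faceChain_val]
  exact bdry_coneMap_faceChain_empty K hΓ hcone hs

/-- Every cycle `z` is the boundary of its cone `coneMap z`. -/
theorem subsingleton_RH_of_cone (c : ℕ) : Subsingleton (RH K hΓ c) := by
  refine Submodule.Quotient.subsingleton_iff.2 (Submodule.eq_top_iff'.2 fun z => ?_)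
  rcases c with _ | c
  · exact ⟨coneMap K v 0 z, LinearMap.congr_fun (bdry_comp_coneMap_zero K hΓ hcone) z⟩
  · refine ⟨coneMap K v (c + 1) z, ?_⟩
    have hz : bdry K hΓ c z = 0 := z.2
    simpa [hz] using LinearMap.congr_fun (bdry_comp_coneMap_add_coneMap_comp_bdry K hΓ hcone c) z

end Cone

end SRPure


open SRPure in
/-- If a face `σ` of a simplicial complex `Δ` is not an intersection of
facets of `Δ`, then `link_Δ σ` is a cone: there is a vertex `v ∉ σ` of the link such that
every face of the link together with `v` is again a face of the link.  In particular the
link is acyclic (all reduced homology, indexed here by cardinality, vanishes). -/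
theorem link_isCone_of_not_inter_facets
    {V : Type*} [LinearOrder V] [Fintype V] (K : Type*) [Field K]
    (Δ : Set (Finset V)) (hΔ : IsDown Δ) (σ : Finset V) (hσ : σ ∈ Δ)
    (hnot : ¬ ∃ 𝒮 : Finset (Finset V), 𝒮.Nonempty ∧ (∀ F ∈ 𝒮, IsFacet Δ F) ∧ ∀ w : V, w ∈ σ ↔ ∀ F ∈ 𝒮, w ∈ F) :
    (∃ v : V, v ∉ σ ∧ {v} ∈ link Δ σ ∧ ∀ τ ∈ link Δ σ, insert v τ ∈ link Δ σ) ∧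
    ∀ c : ℕ, Subsingleton (RH K (link_down hΔ σ) c) := by
  obtain ⟨w, hwσ, hw⟩ := exists_forall_isFacet_mem_of_not_inter_facets hσ hnot
  have hcone := insert_mem_link hΔ hwσ hw
  exact ⟨⟨w, hwσ, by simpa using hcone ∅ (empty_mem_link hσ), hcone⟩,
    subsingleton_RH_of_cone K (link_down hΔ σ) hcone⟩
end

section
/- Let Δ be a pure simplicial complex on vertex set V, let i ≥ 1, and let σ be a face of Δ. Then there is an isomorphism of simplicial complexes link_{φ_i(Δ)}(σ) ≅ φ_i(link_Δ(σ)), given on the new vertices by u_τ ↦ u_{τ∖σ}. -/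
open Finset

/-- The complex `φ_i(Δ)` on the vertex set `V ⊔ S^i_Δ`, where `D = dim Δ + 1` is the
common cardinality of the facets of the pure complex `Δ`: new vertices `u_τ = Sum.inr τ`
exist for faces `τ` with `|τ| ≥ D + 1 - i`, and the faces of `φ_i(Δ)` are the sets
`σ ⊔ {u_{τ_1}, …, u_{τ_r}}` for chains `σ ⊆ τ_1 ⊂ … ⊂ τ_r` in `Δ`. -/
def phiC {V : Type*} [DecidableEq V] (Δ : Set (Finset V)) (D i : ℕ) :
    Set (Finset (V ⊕ Finset V)) :=
  {F | ∃ σ ∈ Δ, ∃ c : Finset (Finset V),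
      (∀ τ ∈ c, τ ∈ Δ ∧ σ ⊆ τ ∧ D + 1 ≤ τ.card + i) ∧
      (∀ τ₁ ∈ c, ∀ τ₂ ∈ c, τ₁ ⊆ τ₂ ∨ τ₂ ⊆ τ₁) ∧
      F = σ.image Sum.inl ∪ c.image Sum.inr}

/-!
A face of `φ_i(Δ)` is determined by its old vertices `F.toLeft` and its chain of new vertices
`F.toRight`. In the link of `σ` every new vertex `u_τ` has `σ ⊆ τ`, so `τ ↦ τ \ σ` and
`ρ ↦ ρ ∪ σ` are mutually inverse between these `τ` and the faces of `link_Δ σ`; both preserve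
chains and shift cardinalities by `|σ|`, which matches the threshold `|τ| ≥ (D - |σ|) + 1 - i`
of `φ_i(link_Δ σ)`.
-/

lemma isChain_iff_total {α : Type*} {r : α → α → Prop} [Std.Refl r] {s : Set α} :
    IsChain r s ↔ ∀ x ∈ s, ∀ y ∈ s, r x y ∨ r y x :=
  ⟨fun h _ hx _ hy => h.total hx hy, fun h _ hx _ hy _ => h _ hx _ hy⟩

namespace Finset

variable {α β γ δ : Type*}

lemma image_inl_union_image_inr [DecidableEq α] [DecidableEq β] (s : Finset α) (t : Finset β) :
    s.image Sum.inl ∪ t.image Sum.inr = s.disjSum t := by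
  ext (x | x) <;> simp

lemma toLeft_image_sumMap [DecidableEq γ] [DecidableEq δ] (u : Finset (α ⊕ β)) (f : α → γ)
    (g : β → δ) : (u.image (Sum.map f g)).toLeft = u.toLeft.image f := by
  ext x; simp

lemma toRight_image_sumMap [DecidableEq γ] [DecidableEq δ] (u : Finset (α ⊕ β)) (f : α → γ)
    (g : β → δ) : (u.image (Sum.map f g)).toRight = u.toRight.image g := by
  ext x; simp

@[simp] lemma toLeft_image_inl [DecidableEq α] [DecidableEq β] (s : Finset α) :
    (s.image (Sum.inl : α → α ⊕ β)).toLeft = s := by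
  ext x; simp

@[simp] lemma toRight_image_inl [DecidableEq α] [DecidableEq β] (s : Finset α) :
    (s.image (Sum.inl : α → α ⊕ β)).toRight = ∅ := by
  ext x; simp

lemma disjoint_image_inl_iff [DecidableEq α] [DecidableEq β] {u : Finset (α ⊕ β)}
    {s : Finset α} : Disjoint u (s.image Sum.inl) ↔ Disjoint u.toLeft s := by
  simp [disjoint_left]

lemma image_image_eq_self [DecidableEq α] [DecidableEq β] {f : α → β} {g : β → α}
    {s : Finset α} (h : ∀ x ∈ s, g (f x) = x) : (s.image f).image g = s := by
  rw [image_image]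
  exact (image_congr h).trans image_id

end Finset

namespace SRPure

variable {V : Type*} [DecidableEq V] {Δ : Set (Finset V)} {D i : ℕ} {σ : Finset V}

lemma sdiff_mem_link {τ : Finset V} (hτ : τ ∈ Δ) (hστ : σ ⊆ τ) : τ \ σ ∈ link Δ σ :=
  ⟨sdiff_disjoint, by rwa [sdiff_union_of_subset hστ]⟩

lemma mem_phiC_iff {F : Finset (V ⊕ Finset V)} :
    F ∈ phiC Δ D i ↔ F.toLeft ∈ Δ ∧ (∀ τ ∈ F.toRight, τ ∈ Δ ∧ F.toLeft ⊆ τ ∧ D + 1 ≤ #τ + i) ∧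
      IsChain (· ⊆ ·) (F.toRight : Set (Finset V)) := by
  simp only [phiC, Set.mem_ofPred_eq, image_inl_union_image_inr, eq_disjSum_iff,
    isChain_iff_total, mem_coe]
  constructor
  · rintro ⟨ρ, hρ, c, hc, hchain, rfl, rfl⟩
    exact ⟨hρ, hc, hchain⟩
  · rintro ⟨hρ, hc, hchain⟩
    exact ⟨_, hρ, _, hc, hchain, rfl, rfl⟩

lemma mem_link_phiC_iff {F : Finset (V ⊕ Finset V)} :
    F ∈ link (phiC Δ D i) (σ.image Sum.inl) ↔ F.toLeft ∈ link Δ σ ∧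
      (∀ τ ∈ F.toRight, τ ∈ Δ ∧ F.toLeft ∪ σ ⊆ τ ∧ D + 1 ≤ #τ + i) ∧
      IsChain (· ⊆ ·) (F.toRight : Set (Finset V)) := by
  simp only [link, Set.mem_ofPred_eq, mem_phiC_iff, toLeft_union, toRight_union,
    toLeft_image_inl, toRight_image_inl, union_empty, disjoint_image_inl_iff, and_assoc]

lemma mapsTo_link_phiC (hi : 1 ≤ i) :
    Set.MapsTo (fun F : Finset (V ⊕ Finset V) => F.image (Sum.map id fun τ => τ \ σ))
      (link (phiC Δ D i) (σ.image Sum.inl)) (phiC (link Δ σ) (D - #σ) i) := by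
  intro F hF
  obtain ⟨hρ, hc, hchain⟩ := mem_link_phiC_iff.1 hF
  rw [mem_phiC_iff, toLeft_image_sumMap, toRight_image_sumMap, image_id, coe_image]
  refine ⟨hρ, forall_mem_image.2 fun τ hτ => ?_,
    hchain.image_of_map_rel _ _ _ fun _ _ h => sdiff_subset_sdiff h subset_rfl⟩
  obtain ⟨hτΔ, hρστ, hcard⟩ := hc τ hτ
  have hστ : σ ⊆ τ := subset_union_right.trans hρστ
  refine ⟨sdiff_mem_link hτΔ hστ, subset_sdiff.2 ⟨subset_union_left.trans hρστ, hρ.1⟩, ?_⟩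
  have := card_le_card hστ
  -- `D - #σ` truncates to `0` when `#σ > D`; then `1 ≤ i` alone gives the bound.
  rw [card_sdiff_of_subset hστ]
  omega

lemma mapsTo_phiC_link :
    Set.MapsTo (fun F : Finset (V ⊕ Finset V) => F.image (Sum.map id fun τ => τ ∪ σ))
      (phiC (link Δ σ) (D - #σ) i) (link (phiC Δ D i) (σ.image Sum.inl)) := by
  intro F hF
  obtain ⟨hρ, hc, hchain⟩ := mem_phiC_iff.1 hF
  rw [mem_link_phiC_iff, toLeft_image_sumMap, toRight_image_sumMap, image_id, coe_image]
  refine ⟨hρ, forall_mem_image.2 fun τ hτ => ?_,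
    hchain.image_of_map_rel _ _ _ fun _ _ h => union_subset_union_left h⟩
  obtain ⟨⟨hτσ, hτσΔ⟩, hρτ, hcard⟩ := hc τ hτ
  refine ⟨hτσΔ, union_subset_union_left hρτ, ?_⟩
  rw [card_union_of_disjoint hτσ]
  omega

lemma leftInvOn_link_phiC :
    Set.LeftInvOn (fun F : Finset (V ⊕ Finset V) => F.image (Sum.map id fun τ => τ ∪ σ))
      (fun F => F.image (Sum.map id fun τ => τ \ σ)) (link (phiC Δ D i) (σ.image Sum.inl)) := by
  intro F hF
  refine image_image_eq_self fun x hx => ?_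
  obtain _ | τ := x
  · rfl
  · have hστ : σ ⊆ τ :=
      subset_union_right.trans ((mem_link_phiC_iff.1 hF).2.1 τ (mem_toRight.2 hx)).2.1
    simp [sdiff_union_of_subset hστ]

lemma rightInvOn_link_phiC :
    Set.RightInvOn (fun F : Finset (V ⊕ Finset V) => F.image (Sum.map id fun τ => τ ∪ σ))
      (fun F => F.image (Sum.map id fun τ => τ \ σ)) (phiC (link Δ σ) (D - #σ) i) := by
  intro F hF
  refine image_image_eq_self fun x hx => ?_
  obtain _ | τ := x
  · rfl
  · have hτσ : Disjoint τ σ := ((mem_phiC_iff.1 hF).2.1 τ (mem_toRight.2 hx)).1.1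
    simp [union_sdiff_cancel_right hτσ]

end SRPure

open SRPure in
theorem link_phiC_bijOn_general {V : Type*} [DecidableEq V]
    (Δ : Set (Finset V)) (D : ℕ) (i : ℕ) (hi : 1 ≤ i) (σ : Finset V) :
    Set.BijOn
      (fun F : Finset (V ⊕ Finset V) => F.image (Sum.map id fun τ => τ \ σ))
      (link (phiC Δ D i) (σ.image Sum.inl))
      (phiC (link Δ σ) (D - σ.card) i) :=
  Set.InvOn.bijOn ⟨leftInvOn_link_phiC, rightInvOn_link_phiC⟩ (mapsTo_link_phiC hi)
    mapsTo_phiC_link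

open SRPure in
/-- For a pure complex `Δ` (all facets of cardinality `D`), `i ≥ 1`
and a face `σ ∈ Δ`, the map sending a face of `link_{φ_i(Δ)}(σ)` to its image under the
vertex map `u_τ ↦ u_{τ \ σ}` (and the identity on old vertices) is an isomorphism of
simplicial complexes `link_{φ_i(Δ)}(σ) ≅ φ_i(link_Δ σ)`. -/
theorem link_phiC_bijOn {V : Type*} [DecidableEq V]
    (Δ : Set (Finset V)) (hΔ : IsDown Δ)
    (D : ℕ) (hD : ∀ s ∈ Δ, s.card ≤ D)
    (hpure : ∀ F : Finset V, IsFacet Δ F → F.card = D)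
    (i : ℕ) (hi : 1 ≤ i) (σ : Finset V) (hσ : σ ∈ Δ) :
    Set.BijOn
      (fun F : Finset (V ⊕ Finset V) => F.image (Sum.map id fun τ => τ \ σ))
      (link (phiC Δ D i) (σ.image Sum.inl))
      (phiC (link Δ σ) (D - σ.card) i) :=
  link_phiC_bijOn_general Δ D i hi σ
end

section
/- Let Δ be a simplicial complex and let σ = {u_{τ_1},…,u_{τ_r}} be a face of the barycentric subdivision B(Δ), corresponding to a chain of faces τ_1 ⊂ … ⊂ τ_r of Δ. Then there is an isomorphism of simplicial complexes link_{B(Δ)}(σ) ≅ B(link_Δ τ_r) * B(link_{∂τ_r} τ_{r−1}) * … * B(link_{∂τ_2} τ_1) * B(∂τ_1), where * denotes join and ∂τ denotes the boundary complex of the simplex on vertex set τ. -/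
open Finset

/-- The barycentric subdivision of `Δ`: vertices are the nonempty faces of `Δ` and the
faces are the chains of such faces. -/
def baryC {V : Type*} (Δ : Set (Finset V)) : Set (Finset (Finset V)) :=
  {C | (∀ τ ∈ C, τ ∈ Δ ∧ τ ≠ ∅) ∧ ∀ τ₁ ∈ C, ∀ τ₂ ∈ C, τ₁ ⊆ τ₂ ∨ τ₂ ⊆ τ₁}

/-- The boundary complex `∂t` of the simplex on the vertex set `t`. -/
def bdrySimplex {V : Type*} (t : Finset V) : Set (Finset V) := {s | s ⊂ t}

/-- The join of two simplicial complexes. -/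
def joinC {V : Type*} [DecidableEq V] (A B : Set (Finset V)) : Set (Finset V) :=
  {F | ∃ a ∈ A, ∃ b ∈ B, F = a ∪ b}

/-- The iterated join of a list of simplicial complexes. -/
def multiJoin {V : Type*} [DecidableEq V] : List (Set (Finset V)) → Set (Finset V)
  | [] => {∅}
  | A :: l => joinC A (multiJoin l)

/-!
Every vertex `u_f` of the link lies at exactly one level `i ≤ r`: `τ_{i-1} ⊂ f ⊂ τ_i`, where
`τ_{-1} = ∅` and at the top level `i = r` the upper bound is just `f ∈ Δ`. At level `i` the vertex
map is `f ↦ f \ τ_{i-1}`, a bijection onto the nonempty faces of `link_{X_i} τ_{i-1}` (with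
`X_i = ∂τ_i`, and `X_r = Δ`) whose inverse is `g ↦ g ∪ τ_{i-1}`. Faces at lower levels are
contained in faces at higher levels, so a chain in the link of `σ` is the same thing as an
independent choice of a chain at each level, that is, a face of the join.
-/

open SRPure

theorem mem_multiJoin_map {W ι : Type*} [DecidableEq W] [DecidableEq ι] {g : ι → Set (Finset W)}
    {l : List ι} (hl : l.Nodup) {F : Finset W} :
    F ∈ multiJoin (l.map g) ↔ ∃ h : ι → Finset W, (∀ i ∈ l, h i ∈ g i) ∧ F = l.toFinset.sup h := by
  induction l generalizing F with
  | nil => simp [multiJoin]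
  | cons i l ih =>
    obtain ⟨hi, hl⟩ := List.nodup_cons.mp hl
    simp only [List.map_cons, multiJoin, joinC, Set.mem_ofPred_eq, ih hl, List.mem_cons,
      forall_eq_or_imp, List.toFinset_cons, sup_insert, sup_eq_union]
    constructor
    · rintro ⟨a, ha, _, ⟨h, hh, rfl⟩, rfl⟩
      have hupd : ∀ j ∈ l, Function.update h i a j = h j := fun j hj =>
        Function.update_of_ne (ne_of_mem_of_not_mem hj hi) _ _
      refine ⟨Function.update h i a, ⟨by simpa, fun j hj => hupd j hj ▸ hh j hj⟩, ?_⟩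
      rw [Function.update_self, sup_congr rfl fun j hj => hupd j (List.mem_toFinset.mp hj)]
    · rintro ⟨h, ⟨hi', hh⟩, rfl⟩
      exact ⟨h i, hi', _, ⟨h, hh, rfl⟩, rfl⟩

theorem isChain_biUnion_of_lt {α ι : Type*} [LinearOrder ι] {r : α → α → Prop} {s : Set ι}
    {E : ι → Set α} (hE : ∀ i ∈ s, IsChain r (E i))
    (hlt : ∀ i ∈ s, ∀ j ∈ s, i < j → ∀ x ∈ E i, ∀ y ∈ E j, r x y) :
    IsChain r (⋃ i ∈ s, E i) := by
  intro x hx y hy hxy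
  simp only [Set.mem_iUnion] at hx hy
  obtain ⟨i, hi, hx⟩ := hx
  obtain ⟨j, hj, hy⟩ := hy
  rcases lt_trichotomy i j with hij | rfl | hij
  · exact Or.inl (hlt i hi j hj hij x hx y hy)
  · exact hE i hi hx hy hxy
  · exact Or.inr (hlt j hj i hi hij y hy x hx)

theorem Finset.sdiff_ne_sdiff_of_ssubset_of_subset {α : Type*} [DecidableEq α] {s t u : Finset α}
    (hst : s ⊂ t) (htu : t ⊆ u) (v : Finset α) : t \ s ≠ v \ u := by
  intro h
  have hdisj : Disjoint (t \ s) u := h ▸ sdiff_disjoint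
  have hempty : t \ s = ∅ := hdisj.eq_bot_of_le (sdiff_subset.trans htu)
  exact not_subset_of_ssubset hst (sdiff_eq_empty_iff_subset.mp hempty)

section Subdivision

variable {V : Type*}

theorem mem_baryC_iff {X : Set (Finset V)} {C : Finset (Finset V)} :
    C ∈ baryC X ↔ (∀ f ∈ C, f ∈ X ∧ f ≠ ∅) ∧ IsChain (· ⊆ ·) (C : Set (Finset V)) :=
  and_congr_right fun _ =>
    ⟨fun h _ ha _ hb _ => h _ ha _ hb, fun h _ ha _ hb => h.total ha hb⟩

section LinkOfFace

variable [DecidableEq V] {X : Set (Finset V)} {t : Finset V}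

theorem link_empty : link X ∅ = X := by
  ext f
  simp [link]

theorem ssubset_union_of_mem_link {g : Finset V} (hg : g ∈ link X t) (hne : g ≠ ∅) :
    t ⊂ g ∪ t := by
  refine Finset.ssubset_iff_subset_ne.2 ⟨subset_union_right, fun h => hne ?_⟩
  rw [← disjoint_self_iff_empty]
  exact hg.1.mono_right (h ▸ subset_union_left)

theorem image_sdiff_mem_baryC_link {C : Finset (Finset V)} (hC : ∀ f ∈ C, t ⊂ f ∧ f ∈ X)
    (hch : IsChain (· ⊆ ·) (C : Set (Finset V))) : C.image (· \ t) ∈ baryC (link X t) := by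
  refine mem_baryC_iff.2 ⟨?_, ?_⟩
  · simp only [mem_image, forall_exists_index, and_imp, forall_apply_eq_imp_iff₂]
    intro f hf
    obtain ⟨htf, hfX⟩ := hC f hf
    exact ⟨⟨sdiff_disjoint, by rwa [sdiff_union_of_subset htf.subset]⟩,
      (sdiff_nonempty.2 (not_subset_of_ssubset htf)).ne_empty⟩
  · rw [coe_image]
    exact hch.image_of_map_rel _ _ _ fun _ _ h => sdiff_subset_sdiff h subset_rfl

end LinkOfFace

def lowerFace (τ : ℕ → Finset V) : ℕ → Finset V
  | 0 => ∅
  | i + 1 => τ i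

def upperComplex (Δ : Set (Finset V)) (τ : ℕ → Finset V) (m i : ℕ) : Set (Finset V) :=
  if i ≤ m then bdrySimplex (τ i) else Δ

/-- Level `i` of the chain `∅ ⊂ τ 0 ⊂ ⋯ ⊂ τ m`: the faces strictly between its `i`-th and
`(i+1)`-st terms, where the term after `τ m` is `Δ` itself. -/
def IsAtLevel (Δ : Set (Finset V)) (τ : ℕ → Finset V) (m i : ℕ) (f : Finset V) : Prop :=
  lowerFace τ i ⊂ f ∧ f ∈ upperComplex Δ τ m i

section Levels

variable {Δ : Set (Finset V)} {τ : ℕ → Finset V} {m i j k : ℕ} {f : Finset V}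

theorem subset_lowerFace (hτ : MonotoneOn τ (Set.Iic m)) (hij : i < j) (hj : j ≤ m + 1) :
    τ i ⊆ lowerFace τ j := by
  cases j with
  | zero => omega
  | succ j => exact hτ (by simp; omega) (by simp; omega) (by omega)

theorem lowerFace_subset (hτ : MonotoneOn τ (Set.Iic m)) (hi : i ≤ m) : lowerFace τ i ⊆ τ i := by
  cases i with
  | zero => exact empty_subset _
  | succ i => exact hτ (by simp; omega) (by simpa using hi) (by omega)

theorem ssubset_of_mem_upperComplex (hi : i ≤ m) (hf : f ∈ upperComplex Δ τ m i) : f ⊂ τ i := by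
  simpa [upperComplex, hi, bdrySimplex] using hf

theorem subset_lowerFace_of_mem_upperComplex (hτ : MonotoneOn τ (Set.Iic m)) (hij : i < j)
    (hj : j ≤ m + 1) (hf : f ∈ upperComplex Δ τ m i) : f ⊆ lowerFace τ j :=
  (ssubset_of_mem_upperComplex (by omega) hf).subset.trans (subset_lowerFace hτ hij hj)

/-- The level of `f` is the first index `i` with `τ i ⊄ f`. -/
theorem exists_isAtLevel (hf : f ≠ ∅) (hfΔ : f ∈ Δ) (hne : ∀ k ≤ m, f ≠ τ k)
    (hcomp : ∀ k ≤ m, f ⊆ τ k ∨ τ k ⊆ f) : ∃ i ≤ m + 1, IsAtLevel Δ τ m i f := by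
  classical
  by_cases hex : ∃ k, k ≤ m ∧ ¬ τ k ⊆ f
  · obtain ⟨i, ⟨him, hif⟩, hmin⟩ : ∃ i, (i ≤ m ∧ ¬ τ i ⊆ f) ∧ ∀ k < i, τ k ⊆ f :=
      ⟨Nat.find hex, Nat.find_spec hex, fun k hk =>
        not_not.1 fun h => Nat.find_min hex hk ⟨(hk.trans_le (Nat.find_spec hex).1).le, h⟩⟩
    refine ⟨i, by omega, ?_, ?_⟩
    · cases i with
      | zero => exact Finset.empty_ssubset.2 (nonempty_iff_ne_empty.2 hf)
      | succ i =>
        exact Finset.ssubset_iff_subset_ne.2 ⟨hmin i (by omega), (hne i (by omega)).symm⟩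
    · rw [upperComplex, if_pos him]
      exact Finset.ssubset_iff_subset_ne.2 ⟨(hcomp i him).resolve_right hif, hne i him⟩
  · simp only [not_exists, not_and, not_not] at hex
    refine ⟨m + 1, le_rfl, Finset.ssubset_iff_subset_ne.2 ⟨hex m le_rfl, (hne m le_rfl).symm⟩, ?_⟩
    simpa [upperComplex] using hfΔ

theorem mem_of_isAtLevel (hΔ : IsDown Δ) (hτ : MonotoneOn τ (Set.Iic m)) (hτm : τ m ∈ Δ)
    (hf : IsAtLevel Δ τ m i f) : f ∈ Δ := by
  by_cases hi : i ≤ m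
  · exact hΔ _ hτm _ ((ssubset_of_mem_upperComplex hi hf.2).subset.trans
      (hτ (by simpa using hi) (by simp) hi))
  · simpa [upperComplex, hi] using hf.2

theorem not_subset_of_isAtLevel (hτ : MonotoneOn τ (Set.Iic m)) (hik : i ≤ k) (hk : k ≤ m)
    (hf : IsAtLevel Δ τ m i f) : ¬ τ k ⊆ f :=
  not_subset_of_ssubset (Finset.ssubset_of_ssubset_of_subset
    (ssubset_of_mem_upperComplex (by omega) hf.2) (hτ (by simp; omega) (by simpa using hk) hik))

theorem ne_of_isAtLevel (hτ : MonotoneOn τ (Set.Iic m)) (hi : i ≤ m + 1) (hk : k ≤ m)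
    (hf : IsAtLevel Δ τ m i f) : f ≠ τ k := by
  rintro rfl
  rcases lt_or_ge k i with hki | hik
  · exact not_subset_of_ssubset hf.1 (subset_lowerFace hτ hki hi)
  · exact not_subset_of_isAtLevel hτ hik hk hf subset_rfl

end Levels

section VertexMap

variable [DecidableEq V] {Δ : Set (Finset V)} {τ : ℕ → Finset V} {m i : ℕ} {f : Finset V}

def baryFace (τ : ℕ → Finset V) (m : ℕ) : Finset (Finset V) := (range (m + 1)).image τ

/-- The largest member of the chain `S` contained in `f`, or `∅` if there is none. -/
def floorIn (S : Finset (Finset V)) (f : Finset V) : Finset V :=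
  (S.filter fun t => t ⊆ f).sup id

def levelJoin (Δ : Set (Finset V)) (τ : ℕ → Finset V) (m : ℕ) : Set (Finset (Finset V)) :=
  {F | ∃ h : ℕ → Finset (Finset V),
    (∀ i ≤ m + 1, h i ∈ baryC (link (upperComplex Δ τ m i) (lowerFace τ i))) ∧
      F = (range (m + 2)).sup h}

theorem floorIn_eq_lowerFace (hτ : MonotoneOn τ (Set.Iic m)) (hi : i ≤ m + 1)
    (hf : IsAtLevel Δ τ m i f) : floorIn (baryFace τ m) f = lowerFace τ i := by
  apply le_antisymm
  · refine Finset.sup_le fun s hs => ?_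
    simp only [baryFace, mem_filter, mem_image, mem_range] at hs
    obtain ⟨⟨k, hk, rfl⟩, hkf⟩ := hs
    rcases lt_or_ge k i with hki | hik
    · exact subset_lowerFace hτ hki hi
    · exact absurd hkf (not_subset_of_isAtLevel hτ hik (by omega) hf)
  · cases i with
    | zero => exact empty_subset _
    | succ i =>
      exact le_sup (f := id)
        (mem_filter.2 ⟨mem_image_of_mem τ (mem_range.2 (by omega)), hf.1.subset⟩)

theorem exists_isAtLevel_of_mem_link {C : Finset (Finset V)}
    (hC : C ∈ link (baryC Δ) (baryFace τ m)) (hf : f ∈ C) : ∃ i ≤ m + 1, IsAtLevel Δ τ m i f := by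
  obtain ⟨hdisj, hmem, hch⟩ := hC
  have hτS : ∀ k ≤ m, τ k ∈ baryFace τ m := fun k hk =>
    mem_image_of_mem τ (mem_range.2 (by omega))
  obtain ⟨hfΔ, hf0⟩ := hmem f (mem_union_left _ hf)
  refine exists_isAtLevel hf0 hfΔ (fun k hk hfk => ?_)
    fun k hk => hch _ (mem_union_left _ hf) _ (mem_union_right _ (hτS k hk))
  exact disjoint_left.1 hdisj hf (hfk ▸ hτS k hk)

theorem injOn_sdiff_floorIn (hτ : MonotoneOn τ (Set.Iic m)) :
    Set.InjOn (fun f => f \ floorIn (baryFace τ m) f) {f | ∃ i ≤ m + 1, IsAtLevel Δ τ m i f} := by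
  rintro f ⟨i, hi, hf⟩ g ⟨j, hj, hg⟩ h
  simp only [floorIn_eq_lowerFace hτ hi hf, floorIn_eq_lowerFace hτ hj hg] at h
  rcases lt_trichotomy i j with hij | rfl | hij
  · exact absurd h (sdiff_ne_sdiff_of_ssubset_of_subset hf.1
      (subset_lowerFace_of_mem_upperComplex hτ hij hj hf.2) g)
  · rw [← sdiff_union_of_subset hf.1.subset, h, sdiff_union_of_subset hg.1.subset]
  · exact absurd h.symm (sdiff_ne_sdiff_of_ssubset_of_subset hg.1
      (subset_lowerFace_of_mem_upperComplex hτ hij hi hg.2) f)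

theorem isAtLevel_union_of_mem_link {g : Finset V}
    (hg : g ∈ link (upperComplex Δ τ m i) (lowerFace τ i)) (hne : g ≠ ∅) :
    IsAtLevel Δ τ m i (g ∪ lowerFace τ i) :=
  ⟨ssubset_union_of_mem_link hg hne, hg.2⟩

theorem isChain_biUnion_insert_lowerFace (hτ : MonotoneOn τ (Set.Iic m))
    {h : ℕ → Finset (Finset V)}
    (hh : ∀ i ≤ m + 1, h i ∈ baryC (link (upperComplex Δ τ m i) (lowerFace τ i))) :
    IsChain (· ⊆ ·) (⋃ i ∈ Set.Iic (m + 1),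
      insert (lowerFace τ i) (((h i).image (· ∪ lowerFace τ i) : Finset (Finset V)) :
        Set (Finset V))) := by
  have hbounds : ∀ i ≤ m + 1, ∀ x ∈ (h i).image (· ∪ lowerFace τ i),
      lowerFace τ i ⊆ x ∧ (i ≤ m → x ⊆ τ i) := by
    intro i hi x hx
    obtain ⟨g, hg, rfl⟩ := mem_image.1 hx
    obtain ⟨hgl, hg0⟩ := (mem_baryC_iff.1 (hh i hi)).1 g hg
    have hat := isAtLevel_union_of_mem_link hgl hg0
    exact ⟨hat.1.subset, fun hi => (ssubset_of_mem_upperComplex hi hat.2).subset⟩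
  refine isChain_biUnion_of_lt (fun i hi => ?_) fun i hi j hj hij x hx y hy => ?_
  · refine IsChain.insert ?_ fun x hx _ => Or.inl (hbounds i hi x hx).1
    rw [coe_image]
    exact (mem_baryC_iff.1 (hh i hi)).2.image_of_map_rel _ _ _
      fun _ _ h => union_subset_union h subset_rfl
  · have hx : i ≤ m → x ⊆ τ i := by
      rcases hx with rfl | hx
      exacts [lowerFace_subset hτ, (hbounds i hi x hx).2]
    have hy : lowerFace τ j ⊆ y := by
      rcases hy with rfl | hy
      exacts [subset_rfl, (hbounds j hj y hy).1]
    exact (hx (by simp at hj; omega)).trans ((subset_lowerFace hτ hij hj).trans hy)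

theorem sup_image_union_lowerFace_mem_link (hΔ : IsDown Δ) (hτ : MonotoneOn τ (Set.Iic m))
    (hτm : τ m ∈ Δ) (hτ0 : τ 0 ≠ ∅) {h : ℕ → Finset (Finset V)}
    (hh : ∀ i ≤ m + 1, h i ∈ baryC (link (upperComplex Δ τ m i) (lowerFace τ i))) :
    (range (m + 2)).sup (fun i => (h i).image (· ∪ lowerFace τ i)) ∈
      link (baryC Δ) (baryFace τ m) := by
  set C := (range (m + 2)).sup (fun i => (h i).image (· ∪ lowerFace τ i))
  have hC : ∀ f ∈ C, ∃ i ≤ m + 1, f ∈ (h i).image (· ∪ lowerFace τ i) := by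
    simp only [C, mem_sup, mem_range]
    exact fun f ⟨i, hi, hf⟩ => ⟨i, by omega, hf⟩
  have hlev : ∀ f ∈ C, ∃ i ≤ m + 1, IsAtLevel Δ τ m i f := by
    intro f hf
    obtain ⟨i, hi, hf⟩ := hC f hf
    obtain ⟨g, hg, rfl⟩ := mem_image.1 hf
    obtain ⟨hgl, hg0⟩ := (mem_baryC_iff.1 (hh i hi)).1 g hg
    exact ⟨i, hi, isAtLevel_union_of_mem_link hgl hg0⟩
  have hS : ∀ t ∈ baryFace τ m, ∃ k ≤ m, τ k = t := by
    simp [baryFace]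
  refine ⟨disjoint_left.2 fun f hf hfS => ?_, mem_baryC_iff.2 ⟨fun f hf => ?_, ?_⟩⟩
  · obtain ⟨i, hi, hfi⟩ := hlev f hf
    obtain ⟨k, hk, rfl⟩ := hS f hfS
    exact ne_of_isAtLevel hτ hi hk hfi rfl
  · rcases mem_union.1 hf with hf | hf
    · obtain ⟨i, hi, hfi⟩ := hlev f hf
      exact ⟨mem_of_isAtLevel hΔ hτ hτm hfi,
        fun h0 => not_subset_of_ssubset hfi.1 (h0 ▸ empty_subset _)⟩
    · obtain ⟨k, hk, rfl⟩ := hS f hf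
      refine ⟨hΔ _ hτm _ (hτ (by simpa using hk) (by simp) hk), fun h0 => hτ0 ?_⟩
      exact subset_empty.1 (h0 ▸ hτ (by simp) (by simpa using hk) (Nat.zero_le k))
  · refine (isChain_biUnion_insert_lowerFace hτ hh).mono fun f hf => ?_
    simp only [Set.mem_iUnion, Set.mem_Iic]
    rcases mem_union.1 hf with hf | hf
    · obtain ⟨i, hi, hf⟩ := hC f hf
      exact ⟨i, hi, Set.mem_insert_of_mem _ hf⟩
    · obtain ⟨k, hk, rfl⟩ := hS f hf
      exact ⟨k + 1, by omega, Set.mem_insert _ _⟩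

theorem mapsTo_link_baryC_levelJoin (hτ : MonotoneOn τ (Set.Iic m)) :
    Set.MapsTo (·.image fun f => f \ floorIn (baryFace τ m) f)
      (link (baryC Δ) (baryFace τ m)) (levelJoin Δ τ m) := by
  classical
  intro C hC
  have hch : IsChain (· ⊆ ·) (C : Set (Finset V)) :=
    (mem_baryC_iff.1 hC.2).2.mono (coe_subset.2 subset_union_left)
  refine ⟨fun i => (C.filter (IsAtLevel Δ τ m i)).image (· \ lowerFace τ i), fun i _ => ?_, ?_⟩
  · exact image_sdiff_mem_baryC_link (fun f hf => (mem_filter.1 hf).2)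
      (hch.mono fun _ hf => (mem_filter.1 hf).1)
  · ext x
    simp only [mem_image, mem_sup, mem_filter, mem_range]
    constructor
    · rintro ⟨f, hf, rfl⟩
      obtain ⟨i, hi, hfi⟩ := exists_isAtLevel_of_mem_link hC hf
      exact ⟨i, by omega, f, ⟨hf, hfi⟩, by rw [floorIn_eq_lowerFace hτ hi hfi]⟩
    · rintro ⟨i, hi, f, ⟨hf, hfi⟩, rfl⟩
      exact ⟨f, hf, by rw [floorIn_eq_lowerFace hτ (by omega) hfi]⟩

theorem injOn_link_baryC (hτ : MonotoneOn τ (Set.Iic m)) :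
    Set.InjOn (·.image fun f => f \ floorIn (baryFace τ m) f) (link (baryC Δ) (baryFace τ m)) := by
  intro C hC D hD h
  have hCD : ((C ∪ D : Finset (Finset V)) : Set (Finset V)) ⊆
      {f | ∃ i ≤ m + 1, IsAtLevel Δ τ m i f} := by
    intro f hf
    rcases mem_union.1 hf with hf | hf
    exacts [exists_isAtLevel_of_mem_link hC hf, exists_isAtLevel_of_mem_link hD hf]
  exact image_injOn_powerset_of_injOn ((injOn_sdiff_floorIn hτ).mono hCD)
    (mem_powerset.2 subset_union_left) (mem_powerset.2 subset_union_right) h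

theorem surjOn_link_baryC_levelJoin (hΔ : IsDown Δ) (hτ : MonotoneOn τ (Set.Iic m))
    (hτm : τ m ∈ Δ) (hτ0 : τ 0 ≠ ∅) :
    Set.SurjOn (·.image fun f => f \ floorIn (baryFace τ m) f)
      (link (baryC Δ) (baryFace τ m)) (levelJoin Δ τ m) := by
  rintro _ ⟨h, hh, rfl⟩
  refine ⟨_, sup_image_union_lowerFace_mem_link hΔ hτ hτm hτ0 hh, ?_⟩
  have hinv : ∀ i ≤ m + 1, ∀ g ∈ h i,
      (g ∪ lowerFace τ i) \ floorIn (baryFace τ m) (g ∪ lowerFace τ i) = g := by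
    intro i hi g hg
    obtain ⟨hgl, hg0⟩ := (mem_baryC_iff.1 (hh i hi)).1 g hg
    rw [floorIn_eq_lowerFace hτ hi (isAtLevel_union_of_mem_link hgl hg0),
      union_sdiff_cancel_right hgl.1]
  ext x
  simp only [mem_image, mem_sup, mem_range]
  constructor
  · rintro ⟨_, ⟨i, hi, g, hg, rfl⟩, rfl⟩
    exact ⟨i, hi, by rwa [hinv i (by omega) g hg]⟩
  · rintro ⟨i, hi, hx⟩
    exact ⟨x ∪ lowerFace τ i, ⟨i, hi, x, hx, rfl⟩, hinv i (by omega) x hx⟩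

end VertexMap

theorem multiJoin_eq_levelJoin [DecidableEq V] (Δ : Set (Finset V)) (τ : ℕ → Finset V) (m : ℕ) :
    multiJoin (baryC (link Δ (τ m)) ::
      (((List.range m).map fun j => baryC (link (bdrySimplex (τ (j + 1))) (τ j))) ++
        [baryC (bdrySimplex (τ 0))])) = levelJoin Δ τ m := by
  -- the join lists its factors by level in the order `m + 1, 1, 2, …, m, 0`
  set l := (m + 1) :: ((List.range m).map (· + 1) ++ [0])
  have hl : l.Nodup := by
    simp [l, List.nodup_append, List.nodup_range, List.Nodup.map, add_left_injective]
  have hlist : baryC (link Δ (τ m)) ::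
      (((List.range m).map fun j => baryC (link (bdrySimplex (τ (j + 1))) (τ j))) ++
        [baryC (bdrySimplex (τ 0))]) =
      l.map fun i => baryC (link (upperComplex Δ τ m i) (lowerFace τ i)) := by
    simp only [l, List.map_cons, List.map_append, List.map_map, List.map_nil]
    congr 2
    · simp [upperComplex, lowerFace]
    · refine List.map_congr_left fun j hj => ?_
      have hj : j + 1 ≤ m := List.mem_range.1 hj
      simp [upperComplex, lowerFace, hj]
    · simp [upperComplex, lowerFace, link_empty]
  have hmem : ∀ i, i ∈ l ↔ i ≤ m + 1 := by
    intro i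
    simp only [l, List.mem_cons, List.mem_append, List.mem_map, List.mem_range,
      List.not_mem_nil, or_false]
    constructor
    · rintro (rfl | ⟨j, hj, rfl⟩ | rfl) <;> omega
    · intro hi
      rcases i with _ | j
      · simp
      · by_cases hj : j = m
        · exact Or.inl (by omega)
        · exact Or.inr (Or.inl ⟨j, by omega, rfl⟩)
  have hrange : l.toFinset = range (m + 2) := by
    ext i
    simp only [List.mem_toFinset, hmem, mem_range]
    omega
  ext F
  rw [hlist, mem_multiJoin_map hl]
  simp only [levelJoin, Set.mem_ofPred_eq, hmem, hrange]

end Subdivision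

open SRPure in
/-- Let `σ = {u_{τ_0}, …, u_{τ_{r-1}}}` be a face of the barycentric
subdivision `B(Δ)` given by a chain `τ_0 ⊂ … ⊂ τ_{r-1}` of nonempty faces of `Δ`.  Then
the vertex map `u_f ↦ u_{f \ τ_j}` (where `τ_j` is the largest chain member contained in
`f`) induces an isomorphism of simplicial complexes
`link_{B(Δ)}(σ) ≅ B(link_Δ τ_{r-1}) * B(link_{∂τ_{r-1}} τ_{r-2}) * … * B(link_{∂τ_1} τ_0) * B(∂τ_0)`. -/
theorem link_bary_bijOn_multiJoin {V : Type*} [DecidableEq V]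
    (Δ : Set (Finset V)) (hΔ : IsDown Δ)
    (r : ℕ) (hr : 1 ≤ r) (τ : ℕ → Finset V)
    (hτΔ : ∀ j < r, τ j ∈ Δ ∧ τ j ≠ ∅)
    (hchain : ∀ j, j + 1 < r → τ j ⊂ τ (j + 1)) :
    Set.BijOn
      (fun C : Finset (Finset V) =>
        C.image fun f => f \ ((((Finset.range r).image τ).filter fun t => t ⊆ f).sup id))
      (link (baryC Δ) ((Finset.range r).image τ))
      (multiJoin (baryC (link Δ (τ (r - 1))) ::
        (((List.range (r - 1)).map fun j =>
            baryC (link (bdrySimplex (τ (j + 1))) (τ j))) ++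
          [baryC (bdrySimplex (τ 0))]))) := by
  obtain ⟨m, rfl⟩ : ∃ m, r = m + 1 := ⟨r - 1, by omega⟩
  have hτ : MonotoneOn τ (Set.Iic m) :=
    monotoneOn_of_le_succ Set.ordConnected_Iic fun j _ _ hj =>
      (hchain j (by simp [Order.succ_eq_add_one] at hj; omega)).subset
  rw [Nat.add_sub_cancel, multiJoin_eq_levelJoin]
  exact ⟨mapsTo_link_baryC_levelJoin hτ, injOn_link_baryC hτ,
    surjOn_link_baryC_levelJoin hΔ hτ (hτΔ m (by omega)).1 (hτΔ 0 (by omega)).2⟩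
end
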